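/- For every ε > 0, m ≥ 0, and t ∈ εℤ₊, we have Σ_{x∈εℤ} P(x,t,m,ε) = 1. -/

import Mathlib

noncomputable section

/-- The `i`-th move of a checker path encoded as `f : Fin n → Bool`
(`true` = upwards-right move `(ε,ε)`, `false` = upwards-left move `(−ε,ε)`);
out-of-range indices default to `true`. -/
def fcStep {n : ℕ} (f : Fin n → Bool) (i : ℕ) : Bool :=
  if h : i < n then f ⟨i, h⟩ else true

/-- The number of turns of the checker path `f`. -/
def fcTurns {n : ℕ} (f : Fin n → Bool) : ℕ :=
  ((Finset.range (n - 1)).filter fun i => fcStep f i ≠ fcStep f (i + 1)).card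

/-- The position (in units of `ε`) of the checker path `f` after `i` moves,
starting from the origin. -/
def fcPos {n : ℕ} (f : Fin n → Bool) (i : ℕ) : ℤ :=
  ∑ j ∈ Finset.range i, (if fcStep f j then (1 : ℤ) else -1)

/-- Checker paths from `(0,0)` to `(εx, εn)` whose first step is to `(ε,ε)`. -/
def fcPaths (n : ℕ) (x : ℤ) : Finset (Fin n → Bool) :=
  Finset.univ.filter fun f =>
    (∀ i : Fin n, (i : ℕ) = 0 → f i = true) ∧ fcPos f n = x

/-- The amplitude `a(εx, εn, m, ε)`. -/
def fcAmp (m ε : ℝ) (x : ℤ) (n : ℕ) : ℂ :=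
  (((1 + m ^ 2 * ε ^ 2) ^ ((1 - (n : ℝ)) / 2) : ℝ) : ℂ) * Complex.I *
    ∑ f ∈ fcPaths n x, (-Complex.I * (m * ε)) ^ fcTurns f

/-- The probability `P(εx, εn, m, ε)` to find the electron at `(εx, εn)`. -/
def fcP (m ε : ℝ) (x : ℤ) (n : ℕ) : ℝ := ‖fcAmp m ε x n‖ ^ 2

/-!
Split the path sum at `(x, n + 1)` by the direction of the last step. Deleting that step gives the
recursion `a₊(x) = a₊(x - 1) + k a₋(x - 1)`, `a₋(x) = a₋(x + 1) + k a₊(x + 1)` with `k = -imε`.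
Since `k` is purely imaginary, `a₊` is real and `a₋ = iβ` is imaginary, and the recursion becomes
`(α, β) ↦ (α - κβ, β + κα)` up to a shift in `x`, with `κ = -mε`. As
`(α - κβ)² + (β + κα)² = (1 + κ²)(α² + β²)`, the total `∑ₓ α² + β²` is multiplied by exactly
`1 + m²ε²` at each step, which the prefactor `(1 + m²ε²)^((1 - n) / 2)` cancels.
-/

lemma fcStep_snoc_of_lt {n : ℕ} (g : Fin n → Bool) (c : Bool) {i : ℕ} (hi : i < n) :
    fcStep (Fin.snoc g c : Fin (n + 1) → Bool) i = fcStep g i := by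
  simp only [fcStep, hi, Nat.lt_succ_of_lt hi, dite_true]
  exact Fin.snoc_castSucc (α := fun _ => Bool) (i := ⟨i, hi⟩) ..

lemma fcStep_snoc_self {n : ℕ} (g : Fin n → Bool) (c : Bool) :
    fcStep (Fin.snoc g c : Fin (n + 1) → Bool) n = c := by
  simp only [fcStep, Nat.lt_succ_self, dite_true]
  exact Fin.snoc_last (α := fun _ => Bool) ..

lemma fcPos_snoc {n : ℕ} (g : Fin n → Bool) (c : Bool) :
    fcPos (Fin.snoc g c : Fin (n + 1) → Bool) (n + 1) = fcPos g n + if c then 1 else -1 := by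
  rw [fcPos, Finset.sum_range_succ, fcStep_snoc_self, fcPos]
  congr 1
  exact Finset.sum_congr rfl fun j hj => by rw [fcStep_snoc_of_lt g c (Finset.mem_range.mp hj)]

lemma fcTurns_snoc {n : ℕ} (g : Fin (n + 1) → Bool) (c : Bool) :
    fcTurns (Fin.snoc g c : Fin (n + 2) → Bool) = fcTurns g + if fcStep g n ≠ c then 1 else 0 := by
  simp only [fcTurns, Finset.card_filter, Nat.add_sub_cancel, Finset.sum_range_succ,
    fcStep_snoc_of_lt g c (Nat.lt_succ_self n), fcStep_snoc_self]
  congr 1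
  refine Finset.sum_congr rfl fun j hj => ?_
  have hj : j < n := Finset.mem_range.mp hj
  rw [fcStep_snoc_of_lt g c (by omega), fcStep_snoc_of_lt g c (by omega)]

lemma mem_fcPaths {n : ℕ} {f : Fin n → Bool} {x : ℤ} :
    f ∈ fcPaths n x ↔ fcStep f 0 = true ∧ fcPos f n = x := by
  simp only [fcPaths, Finset.mem_filter, Finset.mem_univ, true_and, fcStep]
  refine and_congr_left fun _ => ⟨fun h => ?_, fun h i hi => ?_⟩
  · split_ifs with hn
    exacts [h _ rfl, rfl]
  · obtain ⟨i, hpos⟩ := i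
    subst hi
    rwa [dif_pos hpos] at h

lemma snoc_mem_fcPaths {n : ℕ} {g : Fin (n + 1) → Bool} {c : Bool} {x : ℤ} :
    (Fin.snoc g c : Fin (n + 2) → Bool) ∈ fcPaths (n + 2) x ↔
      g ∈ fcPaths (n + 1) (x - if c then 1 else -1) := by
  rw [mem_fcPaths, mem_fcPaths, fcStep_snoc_of_lt g c n.succ_pos, fcPos_snoc, eq_sub_iff_add_eq]

lemma sum_fcPaths_filter_last {M : Type*} [AddCommMonoid M] (n : ℕ) (x : ℤ) (b : Bool)
    (F : (Fin (n + 2) → Bool) → M) :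
    ∑ f ∈ (fcPaths (n + 2) x).filter (fun f => fcStep f (n + 1) = b), F f =
      ∑ g ∈ fcPaths (n + 1) (x - if b then 1 else -1), F (Fin.snoc g b) := by
  have snoc_init : ∀ f : Fin (n + 2) → Bool, fcStep f (n + 1) = b →
      (Fin.snoc (Fin.init f) b : Fin (n + 2) → Bool) = f := fun f hf => by
    rw [← Fin.snoc_init_self f, fcStep_snoc_self] at hf
    rw [← hf, Fin.snoc_init_self]
  refine Finset.sum_nbij' Fin.init (Fin.snoc · b) (fun f hf => ?_) (fun g hg => ?_)
    (fun f hf => snoc_init f (Finset.mem_filter.mp hf).2) (fun g _ => Fin.init_snoc ..)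
    (fun f hf => by rw [snoc_init f (Finset.mem_filter.mp hf).2])
  · obtain ⟨hf, hb⟩ := Finset.mem_filter.mp hf
    rw [← snoc_mem_fcPaths, snoc_init f hb]
    exact hf
  · exact Finset.mem_filter.mpr ⟨snoc_mem_fcPaths.mpr hg, fcStep_snoc_self g b⟩

def fcLastStepSum (k : ℂ) (n : ℕ) (x : ℤ) (b : Bool) : ℂ :=
  ∑ f ∈ (fcPaths (n + 1) x).filter (fun f => fcStep f n = b), k ^ fcTurns f

lemma fcLastStepSum_succ (k : ℂ) (n : ℕ) (x : ℤ) (b : Bool) :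
    fcLastStepSum k (n + 1) x b =
      fcLastStepSum k n (x - if b then 1 else -1) b +
        k * fcLastStepSum k n (x - if b then 1 else -1) (!b) := by
  rw [fcLastStepSum, sum_fcPaths_filter_last, fcLastStepSum, fcLastStepSum, Finset.mul_sum,
    ← Finset.sum_filter_add_sum_filter_not _ (fun g => fcStep g n = b)]
  congr 1 <;> refine Finset.sum_congr ?_ fun g hg => ?_
  · rfl
  · rw [fcTurns_snoc, if_neg (not_not.mpr (Finset.mem_filter.mp hg).2), add_zero]
  · refine Finset.filter_congr fun g _ => ?_
    cases b <;> simp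
  · rw [fcTurns_snoc, if_pos, pow_succ, mul_comm]
    cases b <;> simp_all

lemma fcLastStepSum_zero (k : ℂ) (x : ℤ) (b : Bool) :
    fcLastStepSum k 0 x b = if x = 1 ∧ b = true then 1 else 0 := by
  have paths : fcPaths 1 x = if x = 1 then {fun _ => true} else ∅ := by
    ext f
    have hf : f = fun _ => f 0 := funext fun i => congrArg f (Subsingleton.elim i 0)
    rw [mem_fcPaths, hf]
    split_ifs with hx <;> cases f 0 <;> simp [fcStep, fcPos, hx, funext_iff, @eq_comm ℤ 1]
  rw [fcLastStepSum, paths]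
  split_ifs <;> cases b <;> simp_all [fcStep, fcTurns, Finset.filter_singleton]

lemma sum_fcPaths_eq (k : ℂ) (n : ℕ) (x : ℤ) :
    ∑ f ∈ fcPaths (n + 1) x, k ^ fcTurns f =
      fcLastStepSum k n x true + fcLastStepSum k n x false := by
  rw [← Finset.sum_filter_add_sum_filter_not _ (fun f => fcStep f n = true)]
  simp only [Bool.not_eq_true, fcLastStepSum]

/-- For `k = iκ`, a path ending with a right step has an even number of turns and one ending with
a left step an odd number, so `fcLastStepSum (I * κ) n x` is `fcRealAmp κ n x true` resp.
`I * fcRealAmp κ n x false`; this is the recursion `fcLastStepSum_succ` for these real parts. -/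
def fcRealAmp (κ : ℝ) : ℕ → ℤ → Bool → ℝ
  | 0, x, b => if x = 1 ∧ b = true then 1 else 0
  | n + 1, x, true => fcRealAmp κ n (x - 1) true - κ * fcRealAmp κ n (x - 1) false
  | n + 1, x, false => fcRealAmp κ n (x + 1) false + κ * fcRealAmp κ n (x + 1) true

lemma fcLastStepSum_eq_fcRealAmp (κ : ℝ) (n : ℕ) (x : ℤ) (b : Bool) :
    fcLastStepSum (Complex.I * κ) n x b = (if b then 1 else Complex.I) * fcRealAmp κ n x b := by
  induction n generalizing x b with
  | zero => rw [fcLastStepSum_zero, fcRealAmp]; split_ifs <;> simp_all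
  | succ n ih =>
    rw [fcLastStepSum_succ, ih, ih]
    cases b <;> simp only [fcRealAmp, Bool.not_false, Bool.not_true, if_true, Bool.false_eq_true,
      if_false, sub_neg_eq_add] <;> push_cast
    · ring
    · linear_combination (κ * fcRealAmp κ n (x - 1) false : ℂ) * Complex.I_sq

lemma hasSum_fcRealAmp_sq (κ : ℝ) (n : ℕ) :
    HasSum (fun x => fcRealAmp κ n x true ^ 2 + fcRealAmp κ n x false ^ 2) ((1 + κ ^ 2) ^ n) := by
  induction n with
  | zero =>
    simpa [fcRealAmp] using hasSum_ite_eq (1 : ℤ) (1 : ℝ)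
  | succ n ih =>
    set α := fun x => fcRealAmp κ n x true
    set β := fun x => fcRealAmp κ n x false
    have rotation : ∀ x,
        (α x - κ * β x) ^ 2 + (β x + κ * α x) ^ 2 = (1 + κ ^ 2) * (α x ^ 2 + β x ^ 2) :=
      fun x => by ring
    have hsum := ih.mul_left (1 + κ ^ 2)
    have summable_right : Summable fun x => (α x - κ * β x) ^ 2 :=
      hsum.summable.of_nonneg_of_le (fun x => sq_nonneg _) fun x => by
        rw [← rotation]; exact le_add_of_nonneg_right (sq_nonneg _)
    have summable_left : Summable fun x => (β x + κ * α x) ^ 2 :=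
      hsum.summable.of_nonneg_of_le (fun x => sq_nonneg _) fun x => by
        rw [← rotation]; exact le_add_of_nonneg_left (sq_nonneg _)
    have shifted := ((Equiv.subRight (1 : ℤ)).hasSum_iff.mpr summable_right.hasSum).add
      ((Equiv.addRight (1 : ℤ)).hasSum_iff.mpr summable_left.hasSum)
    rwa [← summable_right.tsum_add summable_left, funext rotation, hsum.tsum_eq,
      ← pow_succ'] at shifted

lemma fcP_succ (m ε : ℝ) (x : ℤ) (n : ℕ) :
    fcP m ε x (n + 1) = ((1 + (m * ε) ^ 2) ^ n)⁻¹ *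
      (fcRealAmp (-(m * ε)) n x true ^ 2 + fcRealAmp (-(m * ε)) n x false ^ 2) := by
  have hk : -Complex.I * (m * ε) = Complex.I * ((-(m * ε) : ℝ) : ℂ) := by push_cast; ring
  have hscale : (((1 + m ^ 2 * ε ^ 2) ^ ((1 - ((n + 1 : ℕ) : ℝ)) / 2) : ℝ)) ^ 2 =
      ((1 + (m * ε) ^ 2) ^ n)⁻¹ := by
    rw [← Real.rpow_mul_natCast (by positivity),
      show (1 - ((n + 1 : ℕ) : ℝ)) / 2 * (2 : ℕ) = -n by push_cast; ring,
      Real.rpow_neg (by positivity), Real.rpow_natCast, mul_pow]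
  rw [fcP, fcAmp, hk, sum_fcPaths_eq, fcLastStepSum_eq_fcRealAmp, fcLastStepSum_eq_fcRealAmp,
    if_pos rfl, if_neg Bool.false_ne_true, one_mul, mul_comm Complex.I (fcRealAmp _ _ _ false : ℂ),
    norm_mul, norm_mul, Complex.norm_I, mul_one, Complex.norm_real, Real.norm_eq_abs, mul_pow,
    sq_abs, hscale, Complex.sq_norm, Complex.normSq_add_mul_I]

theorem stmt16_general (m ε : ℝ) (n : ℕ) (hn : 0 < n) :
    ∑' X : ℤ, fcP m ε X n = 1 := by
  obtain ⟨n, rfl⟩ := Nat.exists_eq_succ_of_ne_zero hn.ne'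
  simp_rw [fcP_succ]
  rw [tsum_mul_left, (hasSum_fcRealAmp_sq _ n).tsum_eq, neg_sq]
  exact inv_mul_cancel₀ (by positivity)

/-- Probability conservation law: for each `t = εn ∈ εℤ₊`, `Σ_{x∈εℤ} P(x,t,m,ε) = 1`. -/
theorem stmt16 (m ε : ℝ) (hε : 0 < ε) (hm : 0 ≤ m) (n : ℕ) (hn : 0 < n) :
    ∑' X : ℤ, fcP m ε X n = 1 :=
  stmt16_general m ε n hn
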